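/- Let 𝒮 be a family of subsets of a set X of VC dimension at most k, and let n ≥ 1. Then the family 𝒮ⁿ∪ := { S₁ ∪ ⋯ ∪ Sₙ : S₁,…,Sₙ ∈ 𝒮 } of n-fold unions of members of 𝒮 has finite VC dimension; more precisely, its VC dimension is bounded by a function of k and n only. -/
import Mathlib


lemma sq_lt_two_pow (s : ℕ) (hs : 6 ≤ s) : s * s + 2 * s < 2 ^ s := by
  induction s with
  | zero => omega
  | succ t ih =>
    rcases Nat.lt_or_ge t 6 with h | h
    · interval_cases t <;> omega
    · have := ih h
      have h2 : 2 ^ (t+1) = 2 * 2 ^ t := by ring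
      nlinarith

lemma numeric (c m : ℕ) (h : 36 + (c+1)*(c+1) ≤ m) : (m+1)^c < 2^m := by
  set s := Nat.sqrt m with hs
  have hs6 : 6 ≤ s := by
    exact Nat.le_sqrt.2 (by omega)
  have hsc : c + 1 ≤ s := Nat.le_sqrt.2 (by omega)
  have hss : s * s ≤ m := Nat.sqrt_le m
  have hm2 : m < 2 ^ s := by
    have h1 : m < (s+1) * (s+1) := Nat.lt_succ_sqrt m
    have h2 := sq_lt_two_pow s hs6
    have h3 : (s+1)*(s+1) = s*s + 2*s + 1 := by ring
    omega
  have key : (m+1)^c ≤ 2 ^ (s * c) := by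
    calc (m+1)^c ≤ (2^s)^c := Nat.pow_le_pow_left hm2 c
    _ = 2 ^ (s*c) := by rw [← pow_mul]
  have hsc2 : s * c < m := by
    have : s * c + s ≤ s * s := by nlinarith
    omega
  calc (m+1)^c ≤ 2 ^ (s*c) := key
  _ < 2 ^ m := Nat.pow_lt_pow_right (by norm_num) hsc2


/-- A finite set `A` is shattered by the set system `𝒮`. -/
def ShattersFam {X : Type*} (𝒮 : Set (Set X)) (A : Finset X) : Prop :=
  ∀ B ⊆ A, ∃ S ∈ 𝒮, (A : Set X) ∩ S = (B : Set X)

/-- The VC dimension of `𝒮` is at most `k`. -/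
def VCDimLE {X : Type*} (𝒮 : Set (Set X)) (k : ℕ) : Prop :=
  ∀ A : Finset X, ShattersFam 𝒮 A → A.card ≤ k

/-- The family of `n`-fold unions of members of a family of VC dimension at most `k`
has VC dimension bounded by a function of `k` and `n` only. -/
theorem stmt4 (k n : ℕ) (hn : 1 ≤ n) :
    ∃ K : ℕ, ∀ (X : Type*) (𝒮 : Set (Set X)), VCDimLE 𝒮 k →
      VCDimLE {T : Set X | ∃ f : Fin n → Set X, (∀ i, f i ∈ 𝒮) ∧ T = ⋃ i, f i} K := by
  classical
  set c := (k+1)*n with hc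
  refine ⟨36 + (c+1)*(c+1) + k, ?_⟩
  intro X 𝒮 h𝒮 A hA
  by_contra hbig
  push_neg at hbig
  set m := A.card with hm
  set 𝒯 : Finset (Finset X) :=
    A.powerset.filter (fun B => ∃ S ∈ 𝒮, (A : Set X) ∩ S = (B : Set X)) with h𝒯
  -- Step A : every subset of A is a union of n members of 𝒯
  have stepA : 2 ^ m ≤ 𝒯.card ^ n := by
    have hsurj : A.powerset ⊆ (Finset.univ : Finset (Fin n → {B // B ∈ 𝒯})).image
        (fun g => Finset.univ.sup (fun i => ((g i : Finset X)))) := by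
      intro B hB
      rw [Finset.mem_powerset] at hB
      obtain ⟨T, ⟨f, hf, rfl⟩, hTB⟩ := hA B hB
      have hmem : ∀ i, A.filter (· ∈ f i) ∈ 𝒯 := by
        intro i
        rw [h𝒯, Finset.mem_filter, Finset.mem_powerset]
        refine ⟨Finset.filter_subset _ _, f i, hf i, ?_⟩
        ext x
        simp [Finset.mem_filter, Finset.mem_coe]
      refine Finset.mem_image.2 ⟨fun i => ⟨A.filter (· ∈ f i), hmem i⟩, Finset.mem_univ _, ?_⟩
      ext x
      have hx : x ∈ (B : Set X) ↔ x ∈ A ∧ ∃ i, x ∈ f i := by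
        rw [← hTB]; simp
      simp only [Finset.mem_sup, Finset.mem_filter, Finset.mem_univ, true_and,
        Finset.mem_coe] at *
      constructor
      · rintro ⟨i, hxA, hxf⟩
        exact (hx.2 ⟨hxA, i, hxf⟩)
      · intro hxB
        obtain ⟨hxA, i, hxf⟩ := hx.1 hxB
        exact ⟨i, hxA, hxf⟩
    calc 2 ^ m = A.powerset.card := (Finset.card_powerset A).symm
    _ ≤ _ := Finset.card_le_card hsurj
    _ ≤ (Finset.univ : Finset (Fin n → {B // B ∈ 𝒯})).card := Finset.card_image_le
    _ = 𝒯.card ^ n := by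
        rw [Finset.card_univ, Fintype.card_fun]
        simp
  -- Step B : Sauer–Shelah bound on 𝒯
  have hkm : k ≤ m := by omega
  have stepB : 𝒯.card ≤ (m+1)^(k+1) := by
    have h1 : 𝒯.card ≤ 𝒯.shatterer.card := Finset.card_le_card_shatterer 𝒯
    have h2 : 𝒯.shatterer ⊆ (Finset.range (k+1)).biUnion (fun i => A.powersetCard i) := by
      intro s hs
      rw [Finset.mem_shatterer] at hs
      have hsA : s ⊆ A := by
        obtain ⟨t, ht, hst⟩ := hs.exists_superset
        rw [h𝒯, Finset.mem_filter, Finset.mem_powerset] at ht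
        exact hst.trans ht.1
      have hsk : s.card ≤ k := by
        apply h𝒮
        intro t ht
        obtain ⟨u, hu, hsu⟩ := hs ht
        rw [h𝒯, Finset.mem_filter, Finset.mem_powerset] at hu
        obtain ⟨huA, S, hS, hAS⟩ := hu
        refine ⟨S, hS, ?_⟩
        have hsub : (s : Set X) ∩ (A : Set X) = (s : Set X) :=
          Set.inter_eq_left.2 (Finset.coe_subset.2 hsA)
        have : (s : Set X) ∩ S = (s : Set X) ∩ ((A : Set X) ∩ S) := by
          rw [← Set.inter_assoc, hsub]
        rw [this, hAS, ← Finset.coe_inter, hsu]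
      refine Finset.mem_biUnion.2 ⟨s.card, Finset.mem_range.2 (by omega), ?_⟩
      exact Finset.mem_powersetCard.2 ⟨hsA, rfl⟩
    have h3 : ((Finset.range (k+1)).biUnion (fun i => A.powersetCard i)).card
        ≤ ∑ i ∈ Finset.range (k+1), (A.powersetCard i).card := Finset.card_biUnion_le
    have h4 : ∀ i ∈ Finset.range (k+1), (A.powersetCard i).card ≤ (m+1)^k := by
      intro i hi
      rw [Finset.mem_range] at hi
      rw [Finset.card_powersetCard]
      calc m.choose i ≤ m ^ i := Nat.choose_le_pow m i
      _ ≤ (m+1) ^ i := Nat.pow_le_pow_left (by omega) i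
      _ ≤ (m+1) ^ k := Nat.pow_le_pow_right (by omega) (by omega)
    have h5 : ∑ i ∈ Finset.range (k+1), (A.powersetCard i).card ≤ (k+1) * (m+1)^k := by
      calc _ ≤ ∑ _i ∈ Finset.range (k+1), (m+1)^k := Finset.sum_le_sum h4
      _ = (k+1) * (m+1)^k := by rw [Finset.sum_const, Finset.card_range, smul_eq_mul]
    have h6 : (k+1) * (m+1)^k ≤ (m+1)^(k+1) := by
      rw [pow_succ, mul_comm]
      exact Nat.mul_le_mul_left _ (by omega)
    exact h1.trans ((Finset.card_le_card h2).trans (h3.trans (h5.trans h6)))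
  -- Combine
  have hchain : 2 ^ m ≤ (m+1)^c := by
    calc 2 ^ m ≤ 𝒯.card ^ n := stepA
    _ ≤ ((m+1)^(k+1))^n := Nat.pow_le_pow_left stepB n
    _ = (m+1)^c := by rw [← pow_mul, hc]
  have := numeric c m (by omega)
  omega
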